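/- Let 0 < r < 1, let C > 0, and define T_k(m) = exp(-m r^k) · ∏_{j=k^-}^{k} (1 - exp(-m(1-r)r^{j-1})) for real m > 0, where k^- = ⌊log_{1/r} m - ω(m)⌋ and k is an integer with k^- ≤ k ≤ ⌊log_{1/r} m + ω(m)⌋. Then |T_k'(m)| ≤ r^{k^-} + (k - k^- + 1)/m for all sufficiently large m. -/

import Mathlib

open Real Filter Finset

/-!
Write `T = E · P` with `E(x) = exp(-x r^k)` and `P` the product of the factors
`1 - exp(-x c_j)`, `c_j = (1-r) r^(j-1)`. All of `E`, `P` and the factors take values in `[0,1]`,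
`|E'| ≤ r^k`, and each factor has derivative `c_j exp(-m c_j) ≤ 1/m` because `u e^{-u} ≤ 1`.
The product rule then bounds `|T'(m)|` by `r^k + (k - k⁻ + 1)/m` for every `m > 0`.
-/

lemma one_sub_exp_neg_nonneg {u : ℝ} (hu : 0 ≤ u) : 0 ≤ 1 - exp (-u) := by
  linarith [exp_le_one_iff.2 (neg_nonpos.2 hu)]

lemma one_sub_exp_neg_le_one (u : ℝ) : 1 - exp (-u) ≤ 1 := by
  linarith [exp_pos (-u)]

lemma mul_exp_neg_mul_le_inv {c m : ℝ} (hm : 0 < m) : c * exp (-(m * c)) ≤ m⁻¹ := by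
  have hexp : exp (-1) ≤ 1 := exp_le_one_iff.2 (by norm_num)
  calc c * exp (-(m * c)) = m⁻¹ * (m * c * exp (-(m * c))) := by field_simp
    _ ≤ m⁻¹ * 1 := by gcongr; exact (mul_exp_neg_le_exp_neg_one _).trans hexp
    _ = m⁻¹ := mul_one _

lemma hasDerivAt_one_sub_exp_neg_mul (c m : ℝ) :
    HasDerivAt (fun x => 1 - exp (-(x * c))) (c * exp (-(m * c))) m := by
  have := (((hasDerivAt_mul_const (x := m) c).fun_neg).exp).const_sub 1
  rwa [mul_neg, neg_neg, mul_comm] at this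

lemma sum_prod_erase_mul_le {ι : Type*} [DecidableEq ι] (s : Finset ι) {a b : ι → ℝ} {B : ℝ}
    (ha₀ : ∀ i ∈ s, 0 ≤ a i) (ha₁ : ∀ i ∈ s, a i ≤ 1) (hb₀ : ∀ i ∈ s, 0 ≤ b i)
    (hb : ∀ i ∈ s, b i ≤ B) :
    ∑ i ∈ s, (∏ j ∈ s.erase i, a j) * b i ≤ #s * B := by
  calc ∑ i ∈ s, (∏ j ∈ s.erase i, a j) * b i ≤ ∑ _i ∈ s, B := by
        refine sum_le_sum fun i hi => ?_
        have hP₀ : 0 ≤ ∏ j ∈ s.erase i, a j :=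
          prod_nonneg fun j hj => ha₀ j (mem_of_mem_erase hj)
        have hP₁ : ∏ j ∈ s.erase i, a j ≤ 1 :=
          prod_le_one (fun j hj => ha₀ j (mem_of_mem_erase hj))
            fun j hj => ha₁ j (mem_of_mem_erase hj)
        nlinarith [hb₀ i hi, hb i hi]
    _ = #s * B := by rw [sum_const, nsmul_eq_mul]

noncomputable def gapFreeTerm (r : ℝ) (kminus k : ℤ) (x : ℝ) : ℝ :=
  exp (-(x * r ^ k)) * ∏ j ∈ Icc kminus k, (1 - exp (-(x * (1 - r) * r ^ (j - 1))))

lemma abs_deriv_gapFreeTerm_le {r m : ℝ} (hr0 : 0 < r) (hr1 : r < 1) {kminus k : ℤ}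
    (hk : kminus ≤ k) (hm : 0 < m) :
    |deriv (gapFreeTerm r kminus k) m| ≤ r ^ k + ((k - kminus + 1 : ℤ) : ℝ) / m := by
  set S := Icc kminus k
  set c : ℤ → ℝ := fun j => (1 - r) * r ^ (j - 1)
  set g : ℤ → ℝ → ℝ := fun j x => 1 - exp (-(x * (1 - r) * r ^ (j - 1)))
  have hc : ∀ j, 0 ≤ c j := fun j => mul_nonneg (by linarith) (zpow_pos hr0 _).le
  have hg : ∀ j, HasDerivAt (g j) (c j * exp (-(m * c j))) m := fun j => by
    simpa only [g, mul_assoc] using hasDerivAt_one_sub_exp_neg_mul (c j) m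
  have hg₀ : ∀ j, 0 ≤ g j m := fun j => by
    simpa only [g, mul_assoc] using one_sub_exp_neg_nonneg (mul_nonneg hm.le (hc j))
  have hg₁ : ∀ j, g j m ≤ 1 := fun j => one_sub_exp_neg_le_one _
  have hT := ((hasDerivAt_mul_const (r ^ k)).fun_neg.exp).fun_mul
    (HasDerivAt.fun_finsetProd (u := S) fun j _ => hg j)
  simp only [smul_eq_mul] at hT
  rw [show deriv (gapFreeTerm r kminus k) m = _ from hT.deriv]
  set E := exp (-(m * r ^ k))
  set P := ∏ j ∈ S, g j m
  set Q := ∑ i ∈ S, (∏ j ∈ S.erase i, g j m) * (c i * exp (-(m * c i)))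
  have hE₀ : 0 < E := exp_pos _
  have hE₁ : E ≤ 1 := exp_le_one_iff.2 (neg_nonpos.2 (by positivity))
  have hP₀ : 0 ≤ P := prod_nonneg fun j _ => hg₀ j
  have hP₁ : P ≤ 1 := prod_le_one (fun j _ => hg₀ j) fun j _ => hg₁ j
  have hQ₀ : 0 ≤ Q := sum_nonneg fun i _ =>
    mul_nonneg (prod_nonneg fun j _ => hg₀ j) (mul_nonneg (hc i) (exp_pos _).le)
  have hQ : Q ≤ #S * m⁻¹ := sum_prod_erase_mul_le S (fun j _ => hg₀ j) (fun j _ => hg₁ j)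
    (fun i _ => mul_nonneg (hc i) (exp_pos _).le) fun i _ => mul_exp_neg_mul_le_inv hm
  have hcard : (#S : ℝ) = ((k - kminus + 1 : ℤ) : ℝ) := by
    rw [Int.card_Icc, ← Int.cast_natCast, Int.toNat_of_nonneg (by omega)]
    ring_nf
  have hrk : 0 < r ^ k := zpow_pos hr0 k
  calc |E * -r ^ k * P + E * Q| ≤ |E * -r ^ k * P| + |E * Q| := abs_add_le _ _
    _ = E * r ^ k * P + E * Q := by
        rw [abs_mul, abs_mul, abs_mul, abs_neg, abs_of_pos hE₀, abs_of_pos hrk,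
          abs_of_nonneg hP₀, abs_of_nonneg hQ₀]
    _ ≤ 1 * r ^ k * 1 + 1 * (#S * m⁻¹) := by gcongr
    _ = r ^ k + ((k - kminus + 1 : ℤ) : ℝ) / m := by rw [hcard]; ring

theorem stmt7_general (r : ℝ) (hr0 : 0 < r) (hr1 : r < 1)
    (ω : ℝ → ℝ) (k kminus : ℤ) :
    ∃ M : ℝ, ∀ m : ℝ, M ≤ m →
      kminus = ⌊Real.logb (1 / r) m - ω m⌋ →
      kminus ≤ k → k ≤ ⌊Real.logb (1 / r) m + ω m⌋ →
      |deriv (fun x : ℝ =>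
          Real.exp (-(x * r ^ k)) *
            ∏ j ∈ Finset.Icc kminus k,
              (1 - Real.exp (-(x * (1 - r) * r ^ (j - 1))))) m| ≤
        r ^ kminus + ((k - kminus + 1 : ℤ) : ℝ) / m := by
  refine ⟨1, fun m hm _ hk _ => ?_⟩
  calc _ ≤ r ^ k + ((k - kminus + 1 : ℤ) : ℝ) / m :=
        abs_deriv_gapFreeTerm_le hr0 hr1 hk (by linarith)
    _ ≤ r ^ kminus + ((k - kminus + 1 : ℤ) : ℝ) / m := by
        grw [zpow_le_zpow_right_of_le_one₀ hr0 hr1.le hk]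

/-- derivative bound for the terms
`T_k(m) = exp(-m r^k) ∏_{j=k⁻}^{k} (1 - exp(-m(1-r)r^(j-1)))` of the gap-free
sum: for all sufficiently large `m` (with `k⁻ = ⌊log_{1/r} m - ω(m)⌋` and
`k⁻ ≤ k ≤ ⌊log_{1/r} m + ω(m)⌋`), `|T_k'(m)| ≤ r^(k⁻) + (k - k⁻ + 1)/m`. -/
theorem stmt7 (r : ℝ) (hr0 : 0 < r) (hr1 : r < 1)
    (ω : ℝ → ℝ) (hω : Tendsto ω atTop atTop) (k kminus : ℤ) :
    ∃ M : ℝ, ∀ m : ℝ, M ≤ m →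
      kminus = ⌊Real.logb (1 / r) m - ω m⌋ →
      kminus ≤ k → k ≤ ⌊Real.logb (1 / r) m + ω m⌋ →
      |deriv (fun x : ℝ =>
          Real.exp (-(x * r ^ k)) *
            ∏ j ∈ Finset.Icc kminus k,
              (1 - Real.exp (-(x * (1 - r) * r ^ (j - 1))))) m| ≤
        r ^ kminus + ((k - kminus + 1 : ℤ) : ℝ) / m :=
  stmt7_general r hr0 hr1 ω k kminus
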